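/- Under the assumptions of the previous construction (γ_A a probability density on ℝ^{Nd} with all one-body marginals equal to μ_A, μ_B a probability density on ℝ^d), the operator P satisfies the L¹ stability estimate ‖γ_A − Pγ_A‖_{L¹(ℝ^{Nd})} ≤ (2^{N−1} + (N−1)/2)‖μ_A − μ_B‖_{L¹(ℝ^d)}. -/

import Mathlib

/-!
`Pγ_A` contains the part of `γ_A` in which no particle moves: its density is at least
`h = γ_A ∏ᵢ a(xᵢ)` with `a = min(μ_A, μ_B)/μ_A`, while its total mass is at most `1`. Hence
`‖γ_A − Pγ_A‖₁ ≤ 2 ∫ (γ_A − h)`. Since `1 − ∏ aᵢ ≤ ∑ (1 − aᵢ)` and every one-body marginal of `γ_A`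
is `μ_A`, `∫ (γ_A − h) ≤ N ∫ μ_A (1 − a) = N ∫ (μ_A − μ_B)₊ ≤ (N/2) ‖μ_A − μ_B‖₁`, and
`N ≤ 2^{N−1} + (N−1)/2`.
-/

open MeasureTheory

/-- The kernel `x' ↦ γ_{B,A}(·, x')/μ_A(x')`, where
`γ_{B,A}(x,x') = f(x)δ_x(x') + f_B(x) f_A(x')/∫f_B` with `f = min(μ_A,μ_B)`,
`f_A = (μ_A − f)₊`, `f_B = (μ_B − f)₊`. -/
noncomputable def coupleKernel (d : ℕ) (μA μB : (Fin d → ℝ) → ℝ) (x' : Fin d → ℝ) :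
    Measure (Fin d → ℝ) :=
  ENNReal.ofReal (min (μA x') (μB x') / μA x') • Measure.dirac x' +
    volume.withDensity (fun x => ENNReal.ofReal
      (max (μA x' - min (μA x') (μB x')) 0 /
          (μA x' * ∫ y, max (μB y - min (μA y) (μB y)) 0) *
        max (μB x - min (μA x) (μB x)) 0))

/-- The operator `P`: `Pγ_A(x_1,…,x_N) = ∫ ∏ᵢ (γ_{B,A}(x_i,x_i')/μ_A(x_i')) γ_A(x') dx'`. -/
noncomputable def smoothP (N d : ℕ) (μA μB : (Fin d → ℝ) → ℝ)
    (ν : Measure (Fin N → Fin d → ℝ)) : Measure (Fin N → Fin d → ℝ) :=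
  ν.bind (fun x' => Measure.pi (fun i => coupleKernel d μA μB (x' i)))

open scoped ENNReal

theorem one_sub_prod_le_sum_one_sub {ι : Type*} (s : Finset ι) {b : ι → ℝ}
    (h0 : ∀ i ∈ s, 0 ≤ b i) (h1 : ∀ i ∈ s, b i ≤ 1) :
    1 - ∏ i ∈ s, b i ≤ ∑ i ∈ s, (1 - b i) := by
  classical
  induction s using Finset.induction_on with
  | empty => simp
  | insert j s hj ih =>
    rw [Finset.forall_mem_insert] at h0 h1
    have hP : ∏ i ∈ s, b i ≤ 1 := Finset.prod_le_one h0.2 h1.2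
    have := ih h0.2 h1.2
    rw [Finset.prod_insert hj, Finset.sum_insert hj]
    -- `1 - b j * P = (1 - b j) + b j * (1 - P)` with `0 ≤ b j ≤ 1` and `0 ≤ 1 - P`
    nlinarith [h0.1, h1.1]

section Integral

variable {α : Type*} [MeasurableSpace α] {μ : Measure α}

theorem integral_abs_sub_le_two_mul_integral_sub {f g h : α → ℝ} (hf : Integrable f μ)
    (hg : Integrable g μ) (hh : Integrable h μ) (hhf : h ≤ᵐ[μ] f) (hhg : h ≤ᵐ[μ] g)
    (hgf : ∫ x, g x ∂μ ≤ ∫ x, f x ∂μ) :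
    ∫ x, |f x - g x| ∂μ ≤ 2 * ∫ x, (f x - h x) ∂μ := by
  have habs : ∀ᵐ x ∂μ, |f x - g x| ≤ (f x - h x) + (g x - h x) := by
    filter_upwards [hhf, hhg] with x hxf hxg
    rw [abs_sub_le_iff]
    constructor <;> linarith
  calc ∫ x, |f x - g x| ∂μ ≤ ∫ x, ((f x - h x) + (g x - h x)) ∂μ :=
        integral_mono_ae (hf.sub hg).abs ((hf.sub hh).add (hg.sub hh)) habs
    _ = (∫ x, f x ∂μ - ∫ x, h x ∂μ) + (∫ x, g x ∂μ - ∫ x, h x ∂μ) := by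
        rw [← integral_sub hf hh, ← integral_sub hg hh]
        exact integral_add (hf.sub hh) (hg.sub hh)
    _ ≤ 2 * ∫ x, (f x - h x) ∂μ := by
        rw [integral_sub hf hh]
        linarith

theorem withDensity_ofReal_apply_univ {f : α → ℝ} (hf : Integrable f μ) (hf0 : 0 ≤ᵐ[μ] f) :
    μ.withDensity (fun x => ENNReal.ofReal (f x)) Set.univ = ENNReal.ofReal (∫ x, f x ∂μ) := by
  rw [withDensity_apply _ MeasurableSet.univ, Measure.restrict_univ,
    ofReal_integral_eq_lintegral_ofReal hf hf0]

theorem integrable_and_integral_le_of_withDensity_apply_univ_le {f : α → ℝ}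
    (hf : AEStronglyMeasurable f μ) (hf0 : 0 ≤ᵐ[μ] f) {c : ℝ} (hc : 0 ≤ c)
    (h : μ.withDensity (fun x => ENNReal.ofReal (f x)) Set.univ ≤ ENNReal.ofReal c) :
    Integrable f μ ∧ ∫ x, f x ∂μ ≤ c := by
  rw [withDensity_apply _ MeasurableSet.univ, Measure.restrict_univ] at h
  refine ⟨(lintegral_ofReal_ne_top_iff_integrable hf hf0).1
    (ne_top_of_le_ne_top ENNReal.ofReal_ne_top h), ?_⟩
  rw [integral_eq_lintegral_of_nonneg_ae hf0 hf]
  exact ENNReal.toReal_le_of_le_ofReal hc h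

theorem integral_mul_comp_eq_of_map_withDensity {β : Type*} [MeasurableSpace β]
    {ν : Measure β} {φ : α → β} {F : α → ℝ} {G : β → ℝ} (hφ : Measurable φ)
    (hF : Measurable F) (hF0 : 0 ≤ᵐ[μ] F) (hG : Measurable G) (hG0 : 0 ≤ᵐ[ν] G)
    (hmap : (μ.withDensity fun x => ENNReal.ofReal (F x)).map φ =
      ν.withDensity fun t => ENNReal.ofReal (G t))
    {g : β → ℝ} (hg : Measurable g) :
    ∫ x, F x * g (φ x) ∂μ = ∫ t, G t * g t ∂ν := by
  calc ∫ x, F x * g (φ x) ∂μ = ∫ x, (ENNReal.ofReal (F x)).toReal • g (φ x) ∂μ :=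
        integral_congr_ae (hF0.mono fun x hx => by simp [ENNReal.toReal_ofReal hx])
    _ = ∫ x, g (φ x) ∂(μ.withDensity fun x => ENNReal.ofReal (F x)) :=
        (integral_withDensity_eq_integral_toReal_smul hF.ennreal_ofReal
          (ae_of_all μ fun _ => ENNReal.ofReal_lt_top) _).symm
    _ = ∫ t, g t ∂(ν.withDensity fun t => ENNReal.ofReal (G t)) := by
        rw [← hmap, integral_map hφ.aemeasurable hg.aestronglyMeasurable]
    _ = ∫ t, (ENNReal.ofReal (G t)).toReal • g t ∂ν :=
        integral_withDensity_eq_integral_toReal_smul hG.ennreal_ofReal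
          (ae_of_all ν fun _ => ENNReal.ofReal_lt_top) _
    _ = ∫ t, G t * g t ∂ν :=
        integral_congr_ae (hG0.mono fun t ht => by simp [ENNReal.toReal_ofReal ht])

theorem ae_le_of_withDensity_ofReal_le [SigmaFinite μ] {f g : α → ℝ} (hf : Measurable f)
    (hg0 : 0 ≤ᵐ[μ] g)
    (h : μ.withDensity (fun x => ENNReal.ofReal (f x)) ≤
      μ.withDensity fun x => ENNReal.ofReal (g x)) :
    f ≤ᵐ[μ] g := by
  have hle := ae_le_of_forall_setLIntegral_le_of_sigmaFinite hf.ennreal_ofReal fun s hs _ => by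
    simpa only [withDensity_apply _ hs] using Measure.le_iff.mp h s hs
  filter_upwards [hle, hg0] with x hfg hg
  exact (ENNReal.ofReal_le_ofReal_iff hg).mp hfg

end Integral

section BindPi

variable {ι E F : Type*} [Fintype ι] [MeasurableSpace E] [MeasurableSpace F] {ν : Measure (ι → E)}

theorem measurable_measure_pi_comp {κ : E → Measure F} (hκ : Measurable κ)
    [∀ t, IsFiniteMeasure (κ t)] :
    Measurable fun x : ι → E => Measure.pi fun i => κ (x i) := by
  have hbox : ∀ s : ι → Set F, (∀ i, MeasurableSet (s i)) →
      Measurable fun x : ι → E => Measure.pi (fun i => κ (x i)) (Set.univ.pi s) := by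
    intro s hs
    simp_rw [Measure.pi_pi]
    exact Finset.measurable_prod _ fun i _ =>
      (Measure.measurable_coe (hs i)).comp (hκ.comp (measurable_pi_apply i))
  refine .measure_of_isPiSystem generateFrom_pi.symm isPiSystem_pi ?_ ?_
  · rintro _ ⟨s, hs, rfl⟩
    exact hbox s fun i => hs i (Set.mem_univ i)
  · simpa only [Set.pi_univ] using hbox (fun _ => Set.univ) fun _ => MeasurableSet.univ

theorem bind_pi_apply_univ_le {κ : E → Measure F} (hκ : Measurable κ)
    [∀ t, IsFiniteMeasure (κ t)] (hmass : ∀ᵐ x ∂ν, ∀ i, κ (x i) Set.univ ≤ 1) :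
    ν.bind (fun x => Measure.pi fun i => κ (x i)) Set.univ ≤ ν Set.univ := by
  rw [Measure.bind_apply MeasurableSet.univ (measurable_measure_pi_comp hκ).aemeasurable,
    ← lintegral_one]
  refine lintegral_mono_ae (hmass.mono fun x hx => ?_)
  rw [Measure.pi_univ]
  exact Finset.prod_le_one' fun i _ => hx i

theorem withDensity_prod_le_bind_pi {κ : E → Measure E} (hκ : Measurable κ)
    [∀ t, IsFiniteMeasure (κ t)] {w : E → ℝ≥0∞} (hw : ∀ t, w t ≤ κ t {t}) :
    ν.withDensity (fun x => ∏ i, w (x i)) ≤ ν.bind (fun x => Measure.pi fun i => κ (x i)) := by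
  refine Measure.le_iff.mpr fun s hs => ?_
  rw [withDensity_apply _ hs, Measure.bind_apply hs (measurable_measure_pi_comp hκ).aemeasurable,
    ← lintegral_indicator hs]
  refine lintegral_mono fun x => ?_
  by_cases hx : x ∈ s
  · rw [Set.indicator_of_mem hx]
    calc ∏ i, w (x i) ≤ ∏ i, κ (x i) {x i} := Finset.prod_le_prod' fun i _ => hw (x i)
      _ = Measure.pi (fun i => κ (x i)) {x} := by
          rw [← Set.univ_pi_singleton, Measure.pi_pi]
      _ ≤ Measure.pi (fun i => κ (x i)) s := measure_mono (Set.singleton_subset_iff.mpr hx)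
  · rw [Set.indicator_of_notMem hx]
    exact zero_le

end BindPi

section Excess

variable {E : Type*} {μA μB : E → ℝ}

/-- `excess μA μB` and `excess μB μA` are the paper's `f_A` and `f_B`. -/
def excess (μA μB : E → ℝ) (t : E) : ℝ := max (μA t - μB t) 0

theorem excess_nonneg (t : E) : 0 ≤ excess μA μB t := le_max_right _ _

theorem max_sub_min_eq_excess (t : E) :
    max (μA t - min (μA t) (μB t)) 0 = excess μA μB t := by
  rcases le_total (μA t) (μB t) with h | h <;> simp [excess, h]

theorem max_sub_min_eq_excess_swap (t : E) :
    max (μB t - min (μA t) (μB t)) 0 = excess μB μA t := by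
  rw [min_comm]; exact max_sub_min_eq_excess t

theorem excess_add_excess (t : E) : excess μA μB t + excess μB μA t = |μA t - μB t| := by
  rcases le_total (μA t) (μB t) with h | h
  · simp [excess, h, abs_of_nonpos (sub_nonpos.mpr h)]
  · simp [excess, h, abs_of_nonneg (sub_nonneg.mpr h)]

theorem excess_sub_excess (t : E) : excess μA μB t - excess μB μA t = μA t - μB t := by
  rcases le_total (μA t) (μB t) with h | h <;> simp [excess, h]

variable [MeasurableSpace E]

theorem measurable_excess (hA : Measurable μA) (hB : Measurable μB) :
    Measurable (excess μA μB) :=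
  (hA.sub hB).max measurable_const

theorem integrable_excess {μ : Measure E} (hA : Integrable μA μ) (hB : Integrable μB μ) :
    Integrable (excess μA μB) μ :=
  (hA.sub hB).pos_part

theorem two_mul_integral_excess_le {μ : Measure E} (hA : Integrable μA μ)
    (hB : Integrable μB μ) (hAB : ∫ t, μA t ∂μ ≤ ∫ t, μB t ∂μ) :
    2 * ∫ t, excess μA μB t ∂μ ≤ ∫ t, |μA t - μB t| ∂μ := by
  have hAB' := integrable_excess hA hB
  have hBA' := integrable_excess hB hA
  have hsum : ∫ t, |μA t - μB t| ∂μ = ∫ t, excess μA μB t ∂μ + ∫ t, excess μB μA t ∂μ := by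
    simp_rw [← excess_add_excess]; exact integral_add hAB' hBA'
  have hdiff : ∫ t, excess μA μB t ∂μ - ∫ t, excess μB μA t ∂μ =
      ∫ t, μA t ∂μ - ∫ t, μB t ∂μ := by
    rw [← integral_sub hAB' hBA', ← integral_sub hA hB]
    simp_rw [excess_sub_excess]
  linarith

end Excess

section Overlap

variable {E : Type*} {μA μB : E → ℝ} {t : E}

/-- The weight `min(μ_A, μ_B)/μ_A` of the atom of `coupleKernel` at its base point, capped at `1`
so that it stays in `[0, 1]` also where `μ_A ≤ 0`. -/
noncomputable def overlapRatio (μA μB : E → ℝ) (t : E) : ℝ := min (min (μA t) (μB t) / μA t) 1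

theorem overlapRatio_nonneg (hB : 0 ≤ μB t) : 0 ≤ overlapRatio μA μB t := by
  refine le_min ?_ zero_le_one
  rcases le_or_gt 0 (μA t) with hA | hA
  · exact div_nonneg (le_min hA hB) hA
  · exact div_nonneg_of_nonpos ((min_le_left _ _).trans hA.le) hA.le

theorem overlapRatio_le_one : overlapRatio μA μB t ≤ 1 := min_le_right _ _

theorem mul_one_sub_overlapRatio (hA : 0 < μA t) :
    μA t * (1 - overlapRatio μA μB t) = excess μA μB t := by
  have hle : min (μA t) (μB t) / μA t ≤ 1 := (div_le_one hA).mpr (min_le_left _ _)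
  rw [overlapRatio, min_eq_left hle, ← max_sub_min_eq_excess,
    max_eq_left (sub_nonneg.mpr (min_le_left _ _))]
  field_simp

theorem prod_overlapRatio_mem_Icc {ι : Type*} (s : Finset ι) (hB : ∀ t, 0 ≤ μB t) (x : ι → E) :
    ∏ i ∈ s, overlapRatio μA μB (x i) ∈ Set.Icc 0 1 :=
  ⟨Finset.prod_nonneg fun _ _ => overlapRatio_nonneg (hB _),
    Finset.prod_le_one (fun _ _ => overlapRatio_nonneg (hB _)) fun _ _ => overlapRatio_le_one⟩

theorem mul_prod_overlapRatio_le {ι : Type*} (s : Finset ι) (hB : ∀ t, 0 ≤ μB t) {c : ℝ}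
    (hc : 0 ≤ c) (x : ι → E) : c * ∏ i ∈ s, overlapRatio μA μB (x i) ≤ c :=
  mul_le_of_le_one_right hc (prod_overlapRatio_mem_Icc s hB x).2

variable [MeasurableSpace E]

theorem measurable_overlapRatio (hA : Measurable μA) (hB : Measurable μB) :
    Measurable (overlapRatio μA μB) :=
  ((hA.min hB).div hA).min measurable_const

theorem MeasureTheory.Integrable.mul_prod_overlapRatio {ι : Type*} [Fintype ι] {μ : Measure (ι → E)}
    {γ : (ι → E) → ℝ} (hγ : Integrable γ μ) (hA : Measurable μA) (hB : Measurable μB)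
    (hB0 : ∀ t, 0 ≤ μB t) : Integrable (fun x => γ x * ∏ i, overlapRatio μA μB (x i)) μ := by
  refine hγ.mul_bdd (c := 1) ?_ (ae_of_all _ fun x => ?_)
  · exact (Finset.measurable_prod _ fun i _ =>
      (measurable_overlapRatio hA hB).comp (measurable_pi_apply i)).aestronglyMeasurable
  · obtain ⟨h0, h1⟩ := prod_overlapRatio_mem_Icc Finset.univ hB0 x
    rwa [Real.norm_eq_abs, abs_of_nonneg h0]

end Overlap

theorem integral_sub_mul_prod_overlapRatio_le {ι E : Type*} [Fintype ι] [MeasurableSpace E]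
    {μ : Measure (ι → E)} {ν : Measure E} {γ : (ι → E) → ℝ} {μA μB : E → ℝ}
    (hγ : Measurable γ) (hγ0 : ∀ x, 0 ≤ γ x) (hγint : Integrable γ μ)
    (hA : Measurable μA) (hB : Measurable μB) (hA0 : ∀ᵐ t ∂ν, 0 < μA t) (hB0 : ∀ t, 0 ≤ μB t)
    (hmarg : ∀ i, (μ.withDensity fun x => ENNReal.ofReal (γ x)).map (fun x => x i) =
      ν.withDensity fun t => ENNReal.ofReal (μA t)) :
    ∫ x, (γ x - γ x * ∏ i, overlapRatio μA μB (x i)) ∂μ ≤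
      Fintype.card ι * ∫ t, excess μA μB t ∂ν := by
  set p := overlapRatio μA μB
  have hp : Measurable p := measurable_overlapRatio hA hB
  have hp0 : ∀ t, 0 ≤ p t := fun t => overlapRatio_nonneg (hB0 t)
  have hp1 : ∀ t, p t ≤ 1 := fun _ => overlapRatio_le_one
  have hterm_int : ∀ i, Integrable (fun x => γ x * (1 - p (x i))) μ := fun i =>
    hγint.mul_bdd (c := 1)
      (measurable_const.sub (hp.comp (measurable_pi_apply i))).aestronglyMeasurable
      (ae_of_all _ fun x => by
        rw [Real.norm_eq_abs, abs_le]
        constructor <;> linarith [hp0 (x i), hp1 (x i)])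
  have hterm : ∀ i, ∫ x, γ x * (1 - p (x i)) ∂μ = ∫ t, excess μA μB t ∂ν := fun i => by
    rw [integral_mul_comp_eq_of_map_withDensity (measurable_pi_apply i) hγ (ae_of_all _ hγ0) hA
      (hA0.mono fun _ ht => ht.le) (hmarg i) (g := fun t => 1 - p t) (measurable_const.sub hp)]
    exact integral_congr_ae (hA0.mono fun t ht => mul_one_sub_overlapRatio ht)
  calc ∫ x, (γ x - γ x * ∏ i, p (x i)) ∂μ ≤ ∫ x, ∑ i, γ x * (1 - p (x i)) ∂μ := by
        refine integral_mono_of_nonneg (ae_of_all _ fun x => ?_)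
          (integrable_finsetSum _ fun i _ => hterm_int i) (ae_of_all _ fun x => ?_)
        · exact sub_nonneg.mpr (mul_prod_overlapRatio_le _ hB0 (hγ0 x) x)
        · show γ x - γ x * ∏ i, p (x i) ≤ ∑ i, γ x * (1 - p (x i))
          rw [← Finset.mul_sum, ← mul_one_sub]
          exact mul_le_mul_of_nonneg_left (one_sub_prod_le_sum_one_sub _
            (fun i _ => hp0 (x i)) fun i _ => hp1 (x i)) (hγ0 x)
    _ = ∑ i, ∫ x, γ x * (1 - p (x i)) ∂μ := integral_finsetSum _ fun i _ => hterm_int i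
    _ = Fintype.card ι * ∫ t, excess μA μB t ∂ν := by
        simp [hterm]

section Coupling

variable {d : ℕ} {μA μB : (Fin d → ℝ) → ℝ}

theorem coupleKernel_apply (x' : Fin d → ℝ) {s : Set (Fin d → ℝ)} (hs : MeasurableSet s) :
    coupleKernel d μA μB x' s =
      ENNReal.ofReal (min (μA x') (μB x') / μA x') * s.indicator 1 x' +
        ENNReal.ofReal (excess μA μB x' / (μA x' * ∫ y, excess μB μA y)) *
          ∫⁻ x in s, ENNReal.ofReal (excess μB μA x) := by
  simp_rw [coupleKernel, max_sub_min_eq_excess, max_sub_min_eq_excess_swap, Measure.add_apply,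
    Measure.smul_apply, smul_eq_mul, Measure.dirac_apply' _ hs, withDensity_apply _ hs,
    ENNReal.ofReal_mul' (excess_nonneg _)]
  rw [lintegral_const_mul' _ _ ENNReal.ofReal_ne_top]

theorem measurable_coupleKernel (hA : Measurable μA) (hB : Measurable μB) :
    Measurable (coupleKernel d μA μB) := by
  refine Measure.measurable_of_measurable_coe _ fun s hs => ?_
  simp_rw [coupleKernel_apply _ hs]
  have hmin := (hA.min hB).div hA
  have hcoef := (measurable_excess hA hB).div (hA.mul_const (∫ y, excess μB μA y))
  exact (hmin.ennreal_ofReal.mul (measurable_one.indicator hs)).add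
    (hcoef.ennreal_ofReal.mul_const _)

theorem coupleKernel_apply_univ (hfB : Integrable (excess μB μA)) (x' : Fin d → ℝ) :
    coupleKernel d μA μB x' Set.univ =
      ENNReal.ofReal (min (μA x') (μB x') / μA x') +
        ENNReal.ofReal (excess μA μB x' / (μA x' * ∫ y, excess μB μA y)) *
          ENNReal.ofReal (∫ y, excess μB μA y) := by
  rw [coupleKernel_apply _ MeasurableSet.univ, Measure.restrict_univ,
    ← ofReal_integral_eq_lintegral_ofReal hfB (ae_of_all _ excess_nonneg)]
  simp

theorem isFiniteMeasure_coupleKernel (hfB : Integrable (excess μB μA)) (x' : Fin d → ℝ) :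
    IsFiniteMeasure (coupleKernel d μA μB x') :=
  ⟨by rw [coupleKernel_apply_univ hfB]; finiteness⟩

theorem coupleKernel_apply_univ_le_one (hfB : Integrable (excess μB μA)) {t : Fin d → ℝ}
    (hA : 0 < μA t) (hB : 0 ≤ μB t) : coupleKernel d μA μB t Set.univ ≤ 1 := by
  set s := ∫ y, excess μB μA y
  have hs : 0 ≤ s := integral_nonneg excess_nonneg
  have hsplit : min (μA t) (μB t) / μA t + excess μA μB t / μA t = 1 := by
    rw [← max_sub_min_eq_excess, max_eq_left (sub_nonneg.mpr (min_le_left _ _))]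
    field_simp
    ring
  have hfrac : excess μA μB t / (μA t * s) * s ≤ excess μA μB t / μA t := by
    rcases hs.eq_or_lt with h0 | hpos
    -- if `∫ f_B = 0`, the coefficient is a division by `0`, hence `0`
    · simp [← h0, div_nonneg (excess_nonneg t) hA.le]
    · rw [div_mul_eq_mul_div, mul_comm (μA t), ← div_div, mul_div_assoc, div_self hpos.ne',
        mul_one]
  rw [coupleKernel_apply_univ hfB, ← ENNReal.ofReal_mul (div_nonneg (excess_nonneg t)
      (mul_nonneg hA.le hs)), ← ENNReal.ofReal_add (div_nonneg (le_min hA.le hB) hA.le)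
      (mul_nonneg (div_nonneg (excess_nonneg t) (mul_nonneg hA.le hs)) hs),
    ← ENNReal.ofReal_one, ← hsplit]
  exact ENNReal.ofReal_le_ofReal (by linarith)

theorem ofReal_overlapRatio_le_coupleKernel_singleton (t : Fin d → ℝ) :
    ENNReal.ofReal (overlapRatio μA μB t) ≤ coupleKernel d μA μB t {t} := by
  rw [coupleKernel_apply _ (measurableSet_singleton t),
    Set.indicator_of_mem (Set.mem_singleton t), Pi.one_apply, mul_one]
  exact le_add_right (ENNReal.ofReal_le_ofReal (min_le_left _ _))

end Coupling

section SmoothP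

variable {N d : ℕ} {μA μB : (Fin d → ℝ) → ℝ}

theorem smoothP_apply_univ_le (hA : Measurable μA) (hB : Measurable μB)
    (hfB : Integrable (excess μB μA)) (hA0 : ∀ᵐ t, 0 < μA t) (hB0 : ∀ t, 0 ≤ μB t)
    {ν : Measure (Fin N → Fin d → ℝ)} (hν : ∀ i, ν.map (fun x => x i) ≪ volume) :
    smoothP N d μA μB ν Set.univ ≤ ν Set.univ := by
  have := isFiniteMeasure_coupleKernel hfB
  have hvol : ∀ᵐ t, coupleKernel d μA μB t Set.univ ≤ 1 :=
    hA0.mono fun t ht => coupleKernel_apply_univ_le_one hfB ht (hB0 t)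
  have hcoord : ∀ i : Fin N, ∀ᵐ x ∂ν, coupleKernel d μA μB (x i) Set.univ ≤ 1 := fun i =>
    ae_of_ae_map (measurable_pi_apply i).aemeasurable ((hν i).ae_le hvol)
  exact bind_pi_apply_univ_le (measurable_coupleKernel hA hB) (ae_all_iff.mpr hcoord)

theorem withDensity_mul_prod_overlapRatio_le_smoothP (hA : Measurable μA) (hB : Measurable μB)
    (hfB : Integrable (excess μB μA)) (hB0 : ∀ t, 0 ≤ μB t)
    {γ : (Fin N → Fin d → ℝ) → ℝ} (hγ : Measurable γ) (hγ0 : ∀ x, 0 ≤ γ x) :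
    volume.withDensity (fun x => ENNReal.ofReal (γ x * ∏ i, overlapRatio μA μB (x i))) ≤
      smoothP N d μA μB (volume.withDensity fun x => ENNReal.ofReal (γ x)) := by
  have := isFiniteMeasure_coupleKernel hfB
  have hsplit : (fun x => ENNReal.ofReal (γ x * ∏ i, overlapRatio μA μB (x i))) =
      (fun x => ENNReal.ofReal (γ x)) *
        fun x => ∏ i, ENNReal.ofReal (overlapRatio μA μB (x i)) := by
    ext x
    rw [Pi.mul_apply, ENNReal.ofReal_mul (hγ0 x),
      ENNReal.ofReal_prod_of_nonneg fun i _ => overlapRatio_nonneg (hB0 _)]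
  have hprod : Measurable fun x : Fin N → Fin d → ℝ =>
      ∏ i, ENNReal.ofReal (overlapRatio μA μB (x i)) :=
    Finset.measurable_prod _ fun i _ =>
      (measurable_overlapRatio hA hB).ennreal_ofReal.comp (measurable_pi_apply i)
  rw [hsplit, withDensity_mul _ hγ.ennreal_ofReal hprod]
  exact withDensity_prod_le_bind_pi (w := fun t => ENNReal.ofReal (overlapRatio μA μB t))
    (measurable_coupleKernel hA hB) ofReal_overlapRatio_le_coupleKernel_singleton

theorem mul_prod_overlapRatio_ae_le_of_smoothP_eq (hA : Measurable μA) (hB : Measurable μB)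
    (hfB : Integrable (excess μB μA)) (hB0 : ∀ t, 0 ≤ μB t)
    {γ ρ : (Fin N → Fin d → ℝ) → ℝ} (hγ : Measurable γ) (hγ0 : ∀ x, 0 ≤ γ x) (hρ0 : ∀ x, 0 ≤ ρ x)
    (hρ : smoothP N d μA μB (volume.withDensity fun x => ENNReal.ofReal (γ x)) =
      volume.withDensity fun x => ENNReal.ofReal (ρ x)) :
    (fun x => γ x * ∏ i, overlapRatio μA μB (x i)) ≤ᵐ[volume] ρ :=
  ae_le_of_withDensity_ofReal_le (hγ.mul (Finset.measurable_prod _ fun i _ =>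
      (measurable_overlapRatio hA hB).comp (measurable_pi_apply i))) (ae_of_all _ hρ0)
    (hρ ▸ withDensity_mul_prod_overlapRatio_le_smoothP hA hB hfB hB0 hγ hγ0)

end SmoothP

theorem natCast_le_two_pow_pred_add (N : ℕ) : (N : ℝ) ≤ 2 ^ (N - 1) + ((N : ℝ) - 1) / 2 := by
  rcases N with _ | n
  · norm_num
  · have : (n : ℝ) + 1 ≤ 2 ^ n := by exact_mod_cast Nat.lt_two_pow_self
    push_cast
    linarith [(n.cast_nonneg : (0 : ℝ) ≤ n)]

/-- L¹ stability: `‖γ_A − Pγ_A‖_{L¹(ℝ^{Nd})} ≤ (2^{N−1} + (N−1)/2) ‖μ_A − μ_B‖_{L¹(ℝ^d)}`,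
where `ρP` denotes the density of `Pγ_A`. -/
theorem smoothP_L1_stability (N d : ℕ) (hN : 1 ≤ N)
    (γA : (Fin N → Fin d → ℝ) → ℝ) (μA μB : (Fin d → ℝ) → ℝ)
    (hγAm : Measurable γA) (hγA0 : ∀ x, 0 ≤ γA x) (hγA1 : ∫ x, γA x = 1)
    (hμAm : Measurable μA) (hμA0 : ∀ᵐ x, 0 < μA x)
    (hμBm : Measurable μB) (hμB0 : ∀ x, 0 ≤ μB x) (hμB1 : ∫ x, μB x = 1)
    (hmarg : ∀ i : Fin N,
      (volume.withDensity (fun x => ENNReal.ofReal (γA x))).map (fun x => x i) =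
        volume.withDensity (fun t => ENNReal.ofReal (μA t)))
    (ρP : (Fin N → Fin d → ℝ) → ℝ) (hρPm : Measurable ρP) (hρP0 : ∀ x, 0 ≤ ρP x)
    (hρP : smoothP N d μA μB (volume.withDensity (fun x => ENNReal.ofReal (γA x))) =
      volume.withDensity (fun x => ENNReal.ofReal (ρP x))) :
    ∫ x, |γA x - ρP x| ≤ (2 ^ (N - 1) + ((N : ℝ) - 1) / 2) * ∫ t, |μA t - μB t| := by
  have hγint : Integrable γA := .of_integral_ne_zero (by simp [hγA1])
  have hμBint : Integrable μB := .of_integral_ne_zero (by simp [hμB1])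
  have hγuniv := withDensity_ofReal_apply_univ hγint (ae_of_all _ hγA0)
  rw [hγA1] at hγuniv
  obtain ⟨hμAint, hμA1⟩ := integrable_and_integral_le_of_withDensity_apply_univ_le
    hμAm.aestronglyMeasurable (hμA0.mono fun _ h => h.le) zero_le_one (by
      rw [← hmarg ⟨0, hN⟩, Measure.map_apply (measurable_pi_apply _) MeasurableSet.univ,
        Set.preimage_univ, hγuniv])
  have hfB := integrable_excess hμBint hμAint
  obtain ⟨hρint, hρ1⟩ := integrable_and_integral_le_of_withDensity_apply_univ_le
    hρPm.aestronglyMeasurable (ae_of_all _ hρP0) zero_le_one (by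
      rw [← hρP, ← hγuniv]
      exact smoothP_apply_univ_le hμAm hμBm hfB hμA0 hμB0 fun i => by
        rw [hmarg i]; exact withDensity_absolutelyContinuous _ _)
  have hdefect := integral_sub_mul_prod_overlapRatio_le hγAm hγA0 hγint hμAm hμBm hμA0 hμB0 hmarg
  have hexcess := two_mul_integral_excess_le hμAint hμBint (hμA1.trans hμB1.ge)
  rw [Fintype.card_fin] at hdefect
  calc ∫ x, |γA x - ρP x| ≤ 2 * ∫ x, (γA x - γA x * ∏ i, overlapRatio μA μB (x i)) :=
        integral_abs_sub_le_two_mul_integral_sub hγint hρint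
          (hγint.mul_prod_overlapRatio hμAm hμBm hμB0)
          (ae_of_all _ fun x => mul_prod_overlapRatio_le _ hμB0 (hγA0 x) x)
          (mul_prod_overlapRatio_ae_le_of_smoothP_eq hμAm hμBm hfB hμB0 hγAm hγA0 hρP0 hρP)
          (hγA1 ▸ hρ1)
    _ ≤ N * ∫ t, |μA t - μB t| := by nlinarith [(N.cast_nonneg : (0 : ℝ) ≤ N)]
    _ ≤ (2 ^ (N - 1) + ((N : ℝ) - 1) / 2) * ∫ t, |μA t - μB t| :=
        mul_le_mul_of_nonneg_right (natCast_le_two_pow_pred_add N)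
          (integral_nonneg fun _ => abs_nonneg _)
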